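/- arXiv:0711.1853 — 6 statements merged into one kernel-verified Lean document; each statement's English description precedes it below -/
import Mathlib

section
/- The ordinal pattern ⟨0,2,3,1⟩ is forbidden for the shift map S₂(x) = 2x mod 1 on [0,1); that is, there is no x ∈ [0,1) with x < S₂²(x) < S₂³(x) < S₂(x). -/
/-!
On `[0, 1)` the map `S₂` is `x ↦ 2x` on `[0, 1/2)` and `x ↦ 2x - 1` on `[1/2, 1)`; the first branch
never moves a point down and the second always does. Hence, writing `y = S₂ x`, the pattern
`x < S₂² x < S₂³ x < S₂ x` forces `y = 2x`, `S₂² x = 2y - 1` and `S₂³ x = 4y - 2`. Then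
`S₂³ x < y` gives `y < 2/3`, while `x < S₂² x` gives `y/2 < 2y - 1`, i.e. `y > 2/3`.
-/

/-- The shift (sawtooth) map `S₂(x) = 2x mod 1`. -/
noncomputable def S2 (x : ℝ) : ℝ := Int.fract (2 * x)

lemma S2_mem_Ico (x : ℝ) : S2 x ∈ Set.Ico (0 : ℝ) 1 :=
  ⟨Int.fract_nonneg _, Int.fract_lt_one _⟩

lemma S2_eq_two_mul_or_eq_two_mul_sub_one {x : ℝ} (hx : x ∈ Set.Ico (0 : ℝ) 1) :
    S2 x = 2 * x ∨ S2 x = 2 * x - 1 := by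
  obtain ⟨hx0, hx1⟩ := hx
  rcases lt_or_ge x (1 / 2) with hlo | hhi
  · exact Or.inl (Int.fract_eq_self.mpr ⟨by linarith, by linarith⟩)
  · right
    rw [S2, ← Int.fract_sub_one]
    exact Int.fract_eq_self.mpr ⟨by linarith, by linarith⟩

lemma S2_eq_two_mul_of_lt_S2 {x : ℝ} (hx : x ∈ Set.Ico (0 : ℝ) 1) (h : x < S2 x) :
    S2 x = 2 * x :=
  (S2_eq_two_mul_or_eq_two_mul_sub_one hx).resolve_right fun h' => by linarith [hx.2]

lemma S2_eq_two_mul_sub_one_of_S2_lt {x : ℝ} (hx : x ∈ Set.Ico (0 : ℝ) 1) (h : S2 x < x) :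
    S2 x = 2 * x - 1 :=
  (S2_eq_two_mul_or_eq_two_mul_sub_one hx).resolve_left fun h' => by linarith [hx.1]

/-- The ordinal pattern `⟨0,2,3,1⟩` is forbidden for the shift map `S₂`. -/
theorem pattern_0231_forbidden :
    ¬ ∃ x ∈ Set.Ico (0 : ℝ) 1,
      x < S2^[2] x ∧ S2^[2] x < S2^[3] x ∧ S2^[3] x < S2 x := by
  rintro ⟨x, hx, h02, h23, h31⟩
  simp only [Function.iterate_succ_apply', Function.iterate_zero_apply] at h02 h23 h31
  have h1 : S2 x = 2 * x := S2_eq_two_mul_of_lt_S2 hx (by linarith)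
  have h2 : S2 (S2 x) = 2 * S2 x - 1 :=
    S2_eq_two_mul_sub_one_of_S2_lt (S2_mem_Ico x) (by linarith)
  have h3 : S2 (S2 (S2 x)) = 2 * S2 (S2 x) := S2_eq_two_mul_of_lt_S2 (S2_mem_Ico _) h23
  linarith
end

section
/- The ordinal pattern ⟨2,0,1,3⟩ is forbidden for the shift map S₂(x) = 2x mod 1 on [0,1); that is, there is no x ∈ [0,1) with S₂²(x) < x < S₂(x) < S₂³(x). -/
theorem S2_eq_two_mul {x : ℝ} (h₀ : 0 ≤ x) (h₁ : x < 1 / 2) : S2 x = 2 * x :=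
  Int.fract_eq_self.2 ⟨by linarith, by linarith⟩

theorem S2_eq_two_mul_sub_one {x : ℝ} (h₀ : 1 / 2 ≤ x) (h₁ : x < 1) : S2 x = 2 * x - 1 :=
  Int.fract_eq_iff.2 ⟨by linarith, by linarith, 1, by push_cast; ring⟩

/-- The ordinal pattern `⟨2,0,1,3⟩` is forbidden for the shift map `S₂`. -/
theorem pattern_2013_forbidden :
    ¬ ∃ x ∈ Set.Ico (0 : ℝ) 1,
      S2^[2] x < x ∧ x < S2 x ∧ S2 x < S2^[3] x := by
  rintro ⟨x, ⟨hx₀, hx₁⟩, h20, h01, h13⟩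
  simp only [Function.iterate_succ_apply', Function.iterate_zero_apply] at h20 h13
  have hx_half : x < 1 / 2 := by
    by_contra! h
    rw [S2_eq_two_mul_sub_one h hx₁] at h01
    linarith
  rw [S2_eq_two_mul hx₀ hx_half] at h01 h20 h13
  have hx_quarter : 1 / 4 ≤ x := by
    by_contra! h
    rw [S2_eq_two_mul (by linarith) (by linarith)] at h20
    linarith
  have hS2 : S2 (2 * x) = 4 * x - 1 := by
    rw [S2_eq_two_mul_sub_one (by linarith) (by linarith)]; ring
  rw [hS2] at h20 h13
  have hS3 : S2 (4 * x - 1) = 8 * x - 2 := by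
    rw [S2_eq_two_mul (by linarith) (by linarith)]; ring
  rw [hS3] at h13
  linarith
end

section
/- The ordinal pattern ⟨2,1,0⟩ is forbidden for the logistic map f(x) = 4x(1-x) on [0,1]; that is, there is no x ∈ [0,1] with f²(x) < f(x) < x. -/
/-!
On `[0,1]` the logistic map moves a point down exactly when the point lies above the fixed
point `3/4`, and it sends every point above `3/4` below `3/4`. So after one downward step
`f x < x` the orbit is at `f x < 3/4`, from where the next step cannot go down again.
-/

/-- The logistic map `f(x) = 4x(1-x)`. -/
def logistic (x : ℝ) : ℝ := 4 * x * (1 - x)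

theorem logistic_lt_self_iff {x : ℝ} (hx : 0 ≤ x) : logistic x < x ↔ 3 / 4 < x := by
  unfold logistic
  constructor <;> intro h <;> nlinarith

theorem logistic_lt_three_quarters {x : ℝ} (hx : 3 / 4 < x) : logistic x < 3 / 4 := by
  unfold logistic
  nlinarith

theorem logistic_nonneg {x : ℝ} (hx : x ∈ Set.Icc (0 : ℝ) 1) : 0 ≤ logistic x := by
  unfold logistic
  nlinarith [hx.1, hx.2]

/-- The ordinal pattern `⟨2,1,0⟩` is forbidden for the logistic map on `[0,1]`:
no `x` satisfies `f²(x) < f(x) < x`. -/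
theorem logistic_pattern_210_forbidden :
    ¬ ∃ x ∈ Set.Icc (0 : ℝ) 1,
      logistic (logistic x) < logistic x ∧ logistic x < x := by
  rintro ⟨x, hx, hf2, hf1⟩
  have hx_above : 3 / 4 < x := (logistic_lt_self_iff hx.1).mp hf1
  have hfx_above : 3 / 4 < logistic x := (logistic_lt_self_iff (logistic_nonneg hx)).mp hf2
  exact (logistic_lt_three_quarters hx_above).not_gt hfx_above
end

section
/- If π = ⟨π₀,...,π_{L-1}⟩ is a forbidden ordinal pattern of length L for a map f on a linearly ordered set X, then the mirrored pattern reflected through order reversal is forbidden for f on X with the reversed order; more concretely, for the one-sided shift Σ on binary sequences, if π is forbidden for Σ then its mirrored pattern ⟨π_{L-1},π_{L-2},...,π₁,π₀⟩ is also forbidden for Σ. -/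
/-- Lexicographic (strict) order on one-sided binary sequences. -/
def lexLt (a b : ℕ → Bool) : Prop := ∃ n, (∀ i < n, a i = b i) ∧ a n < b n

/-- The one-sided shift on binary sequences. -/
def shift (a : ℕ → Bool) : ℕ → Bool := fun n => a (n + 1)

/-! Bitwise complement reverses the lexicographic order and commutes with the shift, so it
turns a sequence realizing the mirrored pattern into one realizing the pattern itself. -/

def complement (a : ℕ → Bool) : ℕ → Bool := fun n => !a n

theorem commute_shift_complement : Function.Commute shift complement := fun _ => rfl

theorem iterate_shift_complement (k : ℕ) (a : ℕ → Bool) :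
    shift^[k] (complement a) = complement (shift^[k] a) :=
  (commute_shift_complement.iterate_left k).eq a

theorem lexLt_complement {a b : ℕ → Bool} (h : lexLt b a) :
    lexLt (complement a) (complement b) := by
  obtain ⟨n, h_eq, h_lt⟩ := h
  refine ⟨n, fun i hi => by rw [complement, complement, h_eq i hi], ?_⟩
  simpa [complement, Bool.lt_iff, and_comm] using h_lt

/-- If `π` is a forbidden pattern for the one-sided binary shift, then so is
its mirrored pattern `⟨π_{L-1}, ..., π₁, π₀⟩`. -/
theorem mirrored_pattern_forbidden (L : ℕ) (π : Equiv.Perm (Fin L))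
    (hforb : ¬ ∃ α : ℕ → Bool, ∀ i j : Fin L, i < j →
      lexLt (shift^[(π i : ℕ)] α) (shift^[(π j : ℕ)] α)) :
    ¬ ∃ α : ℕ → Bool, ∀ i j : Fin L, i < j →
      lexLt (shift^[(π (Fin.rev i) : ℕ)] α) (shift^[(π (Fin.rev j) : ℕ)] α) := by
  rintro ⟨α, hα⟩
  refine hforb ⟨complement α, fun i j hij => ?_⟩
  rw [iterate_shift_complement, iterate_shift_complement]
  simpa using lexLt_complement (hα j.rev i.rev (Fin.rev_lt_rev.mpr hij))
end

section
/- For the one-sided shift Σ on two symbols {0,1}, the ordinal pattern ⟨0,2,3,1⟩ of length 4 = |A| + 2 is forbidden: no binary sequence α satisfies α ≺ Σ²(α) ≺ Σ³(α) ≺ Σ(α) in lexicographic order. -/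
/-!
A sequence lexicographically below its own shift starts with `0`: up to the first difference
it is constant, and at that difference its letter is `0`. Applied to `Σ²α ≺ Σ(Σ²α)` this gives
`α₂ = 0`, so `α ≺ Σ²α` forces `α₀ ≤ α₂ = 0`. Hence `α` and `Σ²α` share their first letter and
the comparison passes to the shifts: `Σα ≺ Σ³α`, against `Σ³α ≺ Σα`.
-/

theorem lexLt_iff_toLex_lt {a b : ℕ → Bool} : lexLt a b ↔ toLex a < toLex b := Iff.rfl

theorem lexLt_asymm {a b : ℕ → Bool} (h : lexLt a b) : ¬ lexLt b a :=
  lt_asymm (lexLt_iff_toLex_lt.1 h)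

theorem apply_zero_le_of_lexLt {a b : ℕ → Bool} (h : lexLt a b) : a 0 ≤ b 0 :=
  Pi.apply_le_of_toLex (lexLt_iff_toLex_lt.1 h).le fun _ hj => absurd hj (Nat.not_lt_zero _)

theorem lexLt_shift_of_lexLt {a b : ℕ → Bool} (h : lexLt a b) (h0 : a 0 = b 0) :
    lexLt (shift a) (shift b) := by
  obtain ⟨n, hagree, hlt⟩ := h
  cases n with
  | zero => exact absurd h0 hlt.ne
  | succ n => exact ⟨n, fun i hi => hagree (i + 1) (by omega), hlt⟩

theorem apply_zero_eq_false_of_lexLt_shift {a : ℕ → Bool} (h : lexLt a (shift a)) :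
    a 0 = false := by
  obtain ⟨n, hagree, hlt⟩ := h
  have hrun : ∀ i ≤ n, a i = a 0 := by
    intro i hi
    induction i with
    | zero => rfl
    | succ i ih => exact (hagree i (by omega)).symm.trans (ih (by omega))
  rw [← hrun n le_rfl]
  exact (Bool.lt_iff.1 hlt).1

/-- For the one-sided binary shift, the pattern `⟨0,2,3,1⟩` (of length
`|A| + 2 = 4`) is forbidden. -/
theorem shift_pattern_0231_forbidden :
    ¬ ∃ α : ℕ → Bool,
      lexLt α (shift^[2] α) ∧ lexLt (shift^[2] α) (shift^[3] α) ∧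
        lexLt (shift^[3] α) (shift α) := by
  rintro ⟨α, h02, h23, h31⟩
  have hα2 : α 2 = false := apply_zero_eq_false_of_lexLt_shift h23
  have hα0 : α 0 = false :=
    le_bot_iff.1 (hα2 ▸ apply_zero_le_of_lexLt h02 : α 0 ≤ false)
  exact lexLt_asymm (lexLt_shift_of_lexLt h02 (hα0.trans hα2.symm)) h31
end

section
/- If π = ⟨π₀,...,π_{L-1}⟩ is a forbidden pattern of length L for a map f, then for every 0 ≤ j ≤ L, the length-(L+1) pattern obtained by incrementing every entry of π by 1 and inserting the symbol 0 at position j (i.e., ⟨π₀+1,...,π_{j-1}+1, 0, π_j+1,...,π_{L-1}+1⟩) is also forbidden for f. -/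
/-! If `x` realizes the extended pattern, then `f x` realizes `π`: the entries `π i + 1` sit at
positions `j.succAbove i` in the same relative order, and `f^[π i + 1] x = f^[π i] (f x)`. -/

theorem insert_zero_shifted_forbidden_general
    {X : Type*} [LinearOrder X] (f : X → X) (L : ℕ)
    (π : Equiv.Perm (Fin L)) (j : Fin (L + 1)) (π' : Equiv.Perm (Fin (L + 1)))
    (hins : ∀ i : Fin L, π' (j.succAbove i) = (π i).succ)
    (hforb : ¬ ∃ x : X, ∀ i k : Fin L, i < k →
      f^[(π i : ℕ)] x < f^[(π k : ℕ)] x) :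
    ¬ ∃ x : X, ∀ i k : Fin (L + 1), i < k →
      f^[(π' i : ℕ)] x < f^[(π' k : ℕ)] x := by
  rintro ⟨x, hx⟩
  refine hforb ⟨f x, fun i k hik => ?_⟩
  have h := hx (j.succAbove i) (j.succAbove k) (Fin.succAbove_lt_succAbove_iff.mpr hik)
  simpa only [hins, Fin.val_succ, Function.iterate_succ_apply] using h

/-- If `π ∈ S_L` is forbidden for `f`, then the pattern of length `L+1`
obtained by incrementing every entry of `π` by one and inserting the symbol
`0` at any position `j` is also forbidden. The new pattern `π'` is
characterized by `π' j = 0` and `π' (j.succAbove i) = π i + 1`. -/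
theorem insert_zero_shifted_forbidden
    {X : Type*} [LinearOrder X] (f : X → X) (L : ℕ)
    (π : Equiv.Perm (Fin L)) (j : Fin (L + 1)) (π' : Equiv.Perm (Fin (L + 1)))
    (hj : π' j = 0)
    (hins : ∀ i : Fin L, π' (j.succAbove i) = (π i).succ)
    (hforb : ¬ ∃ x : X, ∀ i k : Fin L, i < k →
      f^[(π i : ℕ)] x < f^[(π k : ℕ)] x) :
    ¬ ∃ x : X, ∀ i k : Fin (L + 1), i < k →
      f^[(π' i : ℕ)] x < f^[(π' k : ℕ)] x :=
  insert_zero_shifted_forbidden_general f L π j π' hins hforb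
end
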